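/- Let T be a convex non-degenerate n-gon in ℝ² and K_T = P_T(S_{n-1}) the reference polygon obtained by the orthogonal-projection part of the SVD of the vertex matrix. Then the in-radius of K_T is at least √(1/(n(n-1))) and the outer-radius of K_T is at most √((n-1)/n); consequently the ratio of in-radius to outer-radius of K_T is at least 1/(n-1). -/

import Mathlib

/-!
The matrix `M = U Q Vᵀ` has orthonormal rows (`M Mᵀ = 1`), and it kills the all-ones vector
because `B 1 = 0` and `B = (U diag σ) (Q Vᵀ)` with `U diag σ` injective. So `M` sends the
barycentre of the simplex to `0` and is a contraction, whence `K_T` lies in the ball of radius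
`|e_j - 1/n| = √((n-1)/n)` about `0`. Conversely, if `|z|² ≤ 1/(n(n-1))` then `w = Mᵀ z` has
coordinate sum `0` and `|w| = |z|`, so every `|w_j| ≤ 1/n`; thus `x = 1/n + w` lies in the simplex
and `M x = z`. Both radii are read off these two concentric balls.
-/

open Matrix Metric

section Vectors

variable {ι m : Type*} [Fintype ι] [Fintype m]

theorem card_mul_sq_le_of_sum_eq_zero {w : ι → ℝ} (hw : ∑ k, w k = 0) (j : ι) :
    Fintype.card ι * w j ^ 2 ≤ (Fintype.card ι - 1) * (w ⬝ᵥ w) := by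
  classical
  have hsplit : w j + ∑ k ∈ Finset.univ.erase j, w k = 0 :=
    (Finset.add_sum_erase _ w (Finset.mem_univ j)).trans hw
  have hsplit_sq : w j ^ 2 + ∑ k ∈ Finset.univ.erase j, w k ^ 2 = w ⬝ᵥ w := by
    rw [Finset.add_sum_erase _ (fun k => w k ^ 2) (Finset.mem_univ j)]
    simp only [dotProduct, sq]
  have hcard : ((Finset.univ.erase j).card : ℝ) + 1 = Fintype.card ι := by
    exact_mod_cast Finset.card_erase_add_one (Finset.mem_univ j)
  have hcs := sq_sum_le_card_mul_sum_sq (s := Finset.univ.erase j) (f := w)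
  rw [show ∑ k ∈ Finset.univ.erase j, w k = -w j by linarith, neg_sq] at hcs
  rw [← hcard, ← hsplit_sq]
  linarith

theorem dotProduct_self_le_one_of_mem_stdSimplex {x : ι → ℝ} (hx : x ∈ stdSimplex ℝ ι) :
    x ⬝ᵥ x ≤ 1 := by
  have h := Finset.sum_sq_le_sq_sum_of_nonneg (s := Finset.univ) (f := x) fun j _ => hx.1 j
  rw [hx.2, one_pow] at h
  simpa only [dotProduct, sq] using h

theorem transpose_mulVec_dotProduct (M : Matrix m ι ℝ) (x : m → ℝ) (y : ι → ℝ) :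
    (Mᵀ *ᵥ x) ⬝ᵥ y = x ⬝ᵥ (M *ᵥ y) := by
  rw [mulVec_transpose, dotProduct_mulVec]

theorem mulVec_dotProduct_self_le [DecidableEq m] {M : Matrix m ι ℝ} (hM : M * Mᵀ = 1)
    (v : ι → ℝ) :
    (M *ᵥ v) ⬝ᵥ (M *ᵥ v) ≤ v ⬝ᵥ v := by
  -- `p = Mᵀ M v` is the orthogonal projection of `v`, and `|v - p|² = |v|² - |M v|²`
  set p := Mᵀ *ᵥ (M *ᵥ v)
  have hvp : v ⬝ᵥ p = (M *ᵥ v) ⬝ᵥ (M *ᵥ v) := by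
    rw [dotProduct_comm, transpose_mulVec_dotProduct]
  have hpp : p ⬝ᵥ p = (M *ᵥ v) ⬝ᵥ (M *ᵥ v) := by
    rw [transpose_mulVec_dotProduct, mulVec_mulVec, hM, one_mulVec]
  have h := dotProduct_self_star_nonneg (v - p)
  simp only [star_trivial, sub_dotProduct, dotProduct_sub, dotProduct_comm p v] at h
  linarith

theorem norm_equiv_symm_sq (v : m → ℝ) : ‖(EuclideanSpace.equiv m ℝ).symm v‖ ^ 2 = v ⬝ᵥ v := by
  rw [← real_inner_self_eq_norm_sq, PiLp.continuousLinearEquiv_symm_apply,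
    EuclideanSpace.inner_toLp_toLp, star_trivial]

theorem equiv_symm_mem_closedBall_zero_sqrt_iff {v : m → ℝ} {a : ℝ} (ha : 0 ≤ a) :
    (EuclideanSpace.equiv m ℝ).symm v ∈ closedBall 0 √a ↔ v ⬝ᵥ v ≤ a := by
  rw [mem_closedBall_zero_iff, Real.le_sqrt (norm_nonneg _) ha, norm_equiv_symm_sq]

end Vectors

section Projection

variable {ι m : Type*} [Fintype ι] [Fintype m] [DecidableEq m] {M : Matrix m ι ℝ}

theorem exists_mem_stdSimplex_mulVec_eq (hM : M * Mᵀ = 1) (hM1 : M *ᵥ 1 = 0)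
    (hι : 1 < Fintype.card ι) {z : m → ℝ}
    (hz : z ⬝ᵥ z ≤ 1 / (Fintype.card ι * (Fintype.card ι - 1))) :
    ∃ x ∈ stdSimplex ℝ ι, M *ᵥ x = z := by
  set n : ℝ := (Fintype.card ι : ℝ) with hn_def
  have hn : 1 < n := by rw [hn_def]; exact_mod_cast hι
  set w := Mᵀ *ᵥ z
  have hww : w ⬝ᵥ w = z ⬝ᵥ z := by
    rw [transpose_mulVec_dotProduct, mulVec_mulVec, hM, one_mulVec]
  have hsum : ∑ k, w k = 0 := by
    have h : w ⬝ᵥ 1 = 0 := by rw [transpose_mulVec_dotProduct, hM1, dotProduct_zero]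
    simpa [dotProduct] using h
  have hw : ∀ j, w j ^ 2 ≤ (1 / n) ^ 2 := by
    intro j
    have h : n * w j ^ 2 ≤ 1 / n := calc
      n * w j ^ 2 ≤ (n - 1) * (z ⬝ᵥ z) := hww ▸ card_mul_sq_le_of_sum_eq_zero hsum j
      _ ≤ (n - 1) * (1 / (n * (n - 1))) := by gcongr
      _ = 1 / n := by field_simp [(by linarith : n - 1 ≠ 0)]
    rw [le_div_iff₀ (by positivity)] at h
    rw [div_pow, one_pow, le_div_iff₀ (by positivity)]
    linear_combination h
  refine ⟨fun j => 1 / n + w j, ⟨fun j => ?_, ?_⟩, ?_⟩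
  · linarith [(abs_le_of_sq_le_sq' (hw j) (by positivity)).1]
  · rw [Finset.sum_add_distrib, hsum, add_zero, Finset.sum_const, Finset.card_univ,
      nsmul_eq_mul, ← hn_def]
    field_simp
  · have hx : (fun j => 1 / n + w j) = (1 / n) • (1 : ι → ℝ) + w := by
      funext j; simp
    rw [hx, mulVec_add, mulVec_smul, hM1, smul_zero, zero_add, mulVec_mulVec, hM, one_mulVec]

theorem mulVec_dotProduct_self_le_of_mem_stdSimplex (hM : M * Mᵀ = 1) (hM1 : M *ᵥ 1 = 0)
    {x : ι → ℝ} (hx : x ∈ stdSimplex ℝ ι) :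
    (M *ᵥ x) ⬝ᵥ (M *ᵥ x) ≤ (Fintype.card ι - 1) / Fintype.card ι := by
  set n : ℝ := (Fintype.card ι : ℝ) with hn_def
  have hn : 0 < n := by
    obtain ⟨j, -, -⟩ := Finset.exists_ne_zero_of_sum_ne_zero (hx.2.trans_ne one_ne_zero)
    rw [hn_def]; exact_mod_cast Fintype.card_pos_iff.mpr ⟨j⟩
  set v := x - (1 / n) • (1 : ι → ℝ)
  have hMv : M *ᵥ x = M *ᵥ v := by
    rw [mulVec_sub, mulVec_smul, hM1, smul_zero, sub_zero]
  have hvv : v ⬝ᵥ v = x ⬝ᵥ x - 1 / n := by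
    have hx1 : x ⬝ᵥ 1 = 1 := by simpa [dotProduct] using hx.2
    have h11 : (1 : ι → ℝ) ⬝ᵥ 1 = n := by simp [dotProduct, n]
    simp only [v, sub_dotProduct, dotProduct_sub, smul_dotProduct, dotProduct_smul,
      dotProduct_comm 1 x, hx1, h11, smul_eq_mul]
    field_simp
    ring
  calc (M *ᵥ x) ⬝ᵥ (M *ᵥ x) ≤ v ⬝ᵥ v := hMv ▸ mulVec_dotProduct_self_le hM v
    _ ≤ 1 - 1 / n := by rw [hvv]; linarith [dotProduct_self_le_one_of_mem_stdSimplex hx]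
    _ = (n - 1) / n := by field_simp

theorem closedBall_subset_image_stdSimplex (hM : M * Mᵀ = 1) (hM1 : M *ᵥ 1 = 0)
    (hι : 1 < Fintype.card ι) :
    closedBall 0 √(1 / (Fintype.card ι * (Fintype.card ι - 1))) ⊆
      (fun l => (EuclideanSpace.equiv m ℝ).symm (M *ᵥ l)) '' stdSimplex ℝ ι := by
  intro y hy
  have hι' : (1 : ℝ) < Fintype.card ι := by exact_mod_cast hι
  rw [← (EuclideanSpace.equiv m ℝ).symm_apply_apply y,
    equiv_symm_mem_closedBall_zero_sqrt_iff
      (one_div_nonneg.2 (mul_nonneg (by positivity) (by linarith)))] at hy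
  obtain ⟨x, hx, hMx⟩ := exists_mem_stdSimplex_mulVec_eq hM hM1 hι hy
  exact ⟨x, hx, by simp [hMx]⟩

theorem image_stdSimplex_subset_closedBall (hM : M * Mᵀ = 1) (hM1 : M *ᵥ 1 = 0) :
    (fun l => (EuclideanSpace.equiv m ℝ).symm (M *ᵥ l)) '' stdSimplex ℝ ι ⊆
      closedBall 0 √((Fintype.card ι - 1) / Fintype.card ι) := by
  rintro _ ⟨x, hx, rfl⟩
  have h := mulVec_dotProduct_self_le_of_mem_stdSimplex hM hM1 hx
  exact (equiv_symm_mem_closedBall_zero_sqrt_iff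
    ((dotProduct_self_star_nonneg _).trans (by simpa using h))).2 h

end Projection

section Radii

variable {E : Type*} [NormedAddCommGroup E] [NormedSpace ℝ E] [Nontrivial E]
  {K : Set E} {c : E} {r : ℝ}

theorem two_mul_le_diam_of_closedBall_subset (hK : Bornology.IsBounded K) (hr : 0 ≤ r)
    (h : closedBall c r ⊆ K) : 2 * r ≤ diam K :=
  diam_closedBall_eq c hr ▸ diam_mono h hK

theorem bddAbove_inscribed_radii (hK : Bornology.IsBounded K) :
    BddAbove {r | ∃ c, closedBall c r ⊆ K} := by
  refine ⟨diam K, fun r ⟨c, hc⟩ => ?_⟩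
  rcases le_or_gt 0 r with hr | hr
  · linarith [two_mul_le_diam_of_closedBall_subset hK hr hc]
  · linarith [diam_nonneg (s := K)]

theorem le_sInf_circumscribed_radii (hr : 0 ≤ r) (hK : closedBall c r ⊆ K)
    (hne : {R | 0 ≤ R ∧ ∃ c, K ⊆ closedBall c R}.Nonempty) :
    r ≤ sInf {R | 0 ≤ R ∧ ∃ c, K ⊆ closedBall c R} := by
  refine le_csInf hne fun R ⟨hR, c', hc'⟩ => ?_
  have h := two_mul_le_diam_of_closedBall_subset isBounded_closedBall hr (hK.trans hc')
  rw [diam_closedBall_eq c' hR] at h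
  linarith

end Radii

section SVD

variable {k m n : Type*} [Fintype k] [Fintype m] [DecidableEq m] [Fintype n]

theorem mulVec_eq_zero_of_mul_diagonal_mul {U : Matrix k m ℝ} (hU : Uᵀ * U = 1) {d : m → ℝ}
    (hd : ∀ i, d i ≠ 0) {A : Matrix m n ℝ} {v : n → ℝ} (h : (U * diagonal d * A) *ᵥ v = 0) :
    A *ᵥ v = 0 := by
  have hdA : diagonal d *ᵥ (A *ᵥ v) = 0 := by
    have h' : Uᵀ *ᵥ ((U * diagonal d * A) *ᵥ v) = 0 := by rw [h, mulVec_zero]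
    rwa [mulVec_mulVec, ← Matrix.mul_assoc, ← Matrix.mul_assoc, hU, Matrix.one_mul,
      ← mulVec_mulVec] at h'
  funext i
  have := congrFun hdA i
  rw [mulVec_diagonal] at this
  exact (mul_eq_zero.1 this).resolve_left (hd i)

theorem mul_mul_transpose_mul_transpose_eq_one {U : Matrix k k ℝ} {Q : Matrix k m ℝ}
    [DecidableEq k] {V : Matrix n m ℝ} (hU : U * Uᵀ = 1) (hQ : Q * Qᵀ = 1) (hV : Vᵀ * V = 1) :
    (U * Q * Vᵀ) * (U * Q * Vᵀ)ᵀ = 1 := by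
  simp only [transpose_mul, transpose_transpose, Matrix.mul_assoc]
  rw [← Matrix.mul_assoc Vᵀ V, hV, Matrix.one_mul, ← Matrix.mul_assoc Q, hQ, Matrix.one_mul, hU]

end SVD

theorem mul_transpose_eq_one_of_apply_eq_ite {m n : ℕ} (hmn : m ≤ n)
    {Q : Matrix (Fin m) (Fin n) ℝ} (hQ : ∀ i j, Q i j = if (i : ℕ) = j then 1 else 0) :
    Q * Qᵀ = 1 := by
  ext i k
  rw [mul_apply, Finset.sum_eq_single ⟨i, by omega⟩]
  · simp [hQ, one_apply, Fin.ext_iff, eq_comm]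
  · intro j _ hj
    simp [hQ, Fin.ext_iff] at hj ⊢
    omega
  · simp

theorem eq_diagonal_mul_of_apply_eq_ite {n : ℕ} {S Q : Matrix (Fin 2) (Fin n) ℝ} {σ₁ σ₂ : ℝ}
    (hS : ∀ i j, S i j = if (i : ℕ) = j then (if (i : ℕ) = 0 then σ₁ else σ₂) else 0)
    (hQ : ∀ i j, Q i j = if (i : ℕ) = j then 1 else 0) :
    S = diagonal ![σ₁, σ₂] * Q := by
  ext i j
  fin_cases i <;> simp [hS, hQ, diagonal_mul]

theorem mulVec_eq_zero_of_svd {n : ℕ} {B S Q : Matrix (Fin 2) (Fin n) ℝ}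
    {U : Matrix (Fin 2) (Fin 2) ℝ} {V : Matrix (Fin n) (Fin n) ℝ} {σ₁ σ₂ : ℝ}
    (hσ₁ : σ₁ ≠ 0) (hσ₂ : σ₂ ≠ 0) (hU : Uᵀ * U = 1)
    (hS : ∀ i j, S i j = if (i : ℕ) = j then (if (i : ℕ) = 0 then σ₁ else σ₂) else 0)
    (hQ : ∀ i j, Q i j = if (i : ℕ) = j then 1 else 0) (hSVD : B = U * S * Vᵀ)
    {v : Fin n → ℝ} (hBv : B *ᵥ v = 0) :
    (U * Q * Vᵀ) *ᵥ v = 0 := by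
  have hQV : (Q * Vᵀ) *ᵥ v = 0 := by
    refine mulVec_eq_zero_of_mul_diagonal_mul hU (d := ![σ₁, σ₂]) ?_ ?_
    · intro i
      fin_cases i <;> simpa
    · rwa [← Matrix.mul_assoc, Matrix.mul_assoc U, ← eq_diagonal_mul_of_apply_eq_ite hS hQ,
        ← hSVD]
  rw [Matrix.mul_assoc U, ← mulVec_mulVec, hQV, mulVec_zero]

theorem sqrt_div_sqrt_eq_one_div_sub_one {x : ℝ} (hx : 1 < x) :
    √(1 / (x * (x - 1))) / √((x - 1) / x) = 1 / (x - 1) := by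
  rw [← Real.sqrt_div' _ (div_nonneg (by linarith) (by linarith)),
    show 1 / (x * (x - 1)) / ((x - 1) / x) = (1 / (x - 1)) ^ 2 by
      field_simp [(by linarith : x - 1 ≠ 0)],
    Real.sqrt_sq (one_div_nonneg.2 (by linarith))]

theorem stmt_11_general (n : ℕ) (hn : 3 ≤ n)
    (B S : Matrix (Fin 2) (Fin n) ℝ) (U : Matrix (Fin 2) (Fin 2) ℝ)
    (V : Matrix (Fin n) (Fin n) ℝ) (σ₁ σ₂ : ℝ)
    (hσ : σ₁ ≥ σ₂) (hσ₂ : 0 < σ₂)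
    (hU : Uᵀ * U = 1) (hV : Vᵀ * V = 1)
    (hS : ∀ (i : Fin 2) (j : Fin n),
      S i j = if (i : ℕ) = (j : ℕ) then (if (i : ℕ) = 0 then σ₁ else σ₂) else 0)
    (hSVD : B = U * S * Vᵀ)
    (hsum : B.mulVec (fun _ => (1 : ℝ)) = 0)
    (Q : Matrix (Fin 2) (Fin n) ℝ)
    (hQ : ∀ (i : Fin 2) (j : Fin n), Q i j = if (i : ℕ) = (j : ℕ) then 1 else 0)
    (K : Set (EuclideanSpace ℝ (Fin 2)))
    (hK : K = (fun l => (EuclideanSpace.equiv (Fin 2) ℝ).symm ((U * Q * Vᵀ).mulVec l)) ''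
      stdSimplex ℝ (Fin n))
    (inradius outradius : ℝ)
    (hin : inradius = sSup {r : ℝ | ∃ c, Metric.closedBall c r ⊆ K})
    (hout : outradius = sInf {r : ℝ | 0 ≤ r ∧ ∃ c, K ⊆ Metric.closedBall c r}) :
    Real.sqrt (1 / (n * (n - 1))) ≤ inradius ∧
    outradius ≤ Real.sqrt ((n - 1) / n) ∧
    1 / (n - 1) ≤ inradius / outradius := by
  have hM : (U * Q * Vᵀ) * (U * Q * Vᵀ)ᵀ = 1 := mul_mul_transpose_mul_transpose_eq_one
    (mul_eq_one_comm.mp hU) (mul_transpose_eq_one_of_apply_eq_ite (by omega) hQ) hV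
  have hM1 : (U * Q * Vᵀ) *ᵥ 1 = 0 :=
    mulVec_eq_zero_of_svd (by linarith) hσ₂.ne' hU hS hQ hSVD hsum
  have hinBall := closedBall_subset_image_stdSimplex hM hM1 (by simp; omega)
  have houtBall := image_stdSimplex_subset_closedBall (ι := Fin n) hM hM1
  rw [← hK, Fintype.card_fin] at hinBall houtBall
  have hn' : (1 : ℝ) < n := by exact_mod_cast (by omega : 1 < n)
  set r := √(1 / (n * (n - 1) : ℝ))
  set R := √((n - 1) / n : ℝ)
  have hr : 0 < r := Real.sqrt_pos.2 (one_div_pos.2 (mul_pos (by linarith) (by linarith)))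
  have hr_in : r ≤ inradius := hin ▸
    le_csSup (bddAbove_inscribed_radii (isBounded_closedBall.subset houtBall)) ⟨0, hinBall⟩
  have hout_R : outradius ≤ R := hout ▸
    csInf_le ⟨0, fun _ h => h.1⟩ ⟨Real.sqrt_nonneg _, 0, houtBall⟩
  have hr_out : r ≤ outradius := hout ▸
    le_sInf_circumscribed_radii hr.le hinBall ⟨R, Real.sqrt_nonneg _, 0, houtBall⟩
  refine ⟨hr_in, hout_R, ?_⟩
  calc 1 / ((n : ℝ) - 1) = r / R := (sqrt_div_sqrt_eq_one_div_sub_one hn').symm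
    _ ≤ inradius / outradius :=
      div_le_div₀ (hr.le.trans hr_in) hr_in (hr.trans_le hr_out) hout_R

/-- For a convex non-degenerate `n`-gon `T` (vertex matrix `B`, columns in convex position,
arithmetic mean at the origin) with SVD `B = UΣVᵀ`, `σ₁ ≥ σ₂ > 0`, the reference polygon
`K_T = (UQVᵀ)(S_{n-1})` has in-radius at least `√(1/(n(n-1)))` and outer-radius at most
`√((n-1)/n)`; consequently the ratio of in-radius to outer-radius is at least `1/(n-1)`. -/
theorem stmt_11 (n : ℕ) (hn : 3 ≤ n)
    (B S : Matrix (Fin 2) (Fin n) ℝ) (U : Matrix (Fin 2) (Fin 2) ℝ)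
    (V : Matrix (Fin n) (Fin n) ℝ) (σ₁ σ₂ : ℝ)
    (hσ : σ₁ ≥ σ₂) (hσ₂ : 0 < σ₂)
    (hU : Uᵀ * U = 1) (hV : Vᵀ * V = 1)
    (hS : ∀ (i : Fin 2) (j : Fin n),
      S i j = if (i : ℕ) = (j : ℕ) then (if (i : ℕ) = 0 then σ₁ else σ₂) else 0)
    (hSVD : B = U * S * Vᵀ)
    (hsum : B.mulVec (fun _ => (1 : ℝ)) = 0)
    -- the vertices (columns of `B`) are in strictly convex position and no three collinear
    (hconv : ∀ i : Fin n,
      (fun r => B r i) ∉ convexHull ℝ {p : Fin 2 → ℝ | ∃ j ≠ i, p = fun r => B r j})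
    (hnodeg : ∀ i j k : Fin n, i ≠ j → j ≠ k → i ≠ k →
      ¬ Collinear ℝ ({fun r => B r i, fun r => B r j, fun r => B r k} : Set (Fin 2 → ℝ)))
    (Q : Matrix (Fin 2) (Fin n) ℝ)
    (hQ : ∀ (i : Fin 2) (j : Fin n), Q i j = if (i : ℕ) = (j : ℕ) then 1 else 0)
    (K : Set (EuclideanSpace ℝ (Fin 2)))
    (hK : K = (fun l => (EuclideanSpace.equiv (Fin 2) ℝ).symm ((U * Q * Vᵀ).mulVec l)) ''
      stdSimplex ℝ (Fin n))
    (inradius outradius : ℝ)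
    (hin : inradius = sSup {r : ℝ | ∃ c, Metric.closedBall c r ⊆ K})
    (hout : outradius = sInf {r : ℝ | 0 ≤ r ∧ ∃ c, K ⊆ Metric.closedBall c r}) :
    Real.sqrt (1 / (n * (n - 1))) ≤ inradius ∧
    outradius ≤ Real.sqrt ((n - 1) / n) ∧
    1 / (n - 1) ≤ inradius / outradius :=
  stmt_11_general n hn B S U V σ₁ σ₂ hσ hσ₂ hU hV hS hSVD hsum Q hQ K hK inradius outradius hin hout
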